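/- Let n, p, C, C̄ ≥ 1 be integers, η > 0, L > 0, γ_B ∈ (0,1), Q_B > 0, and set m = n^{nC} Q_B L; fix k ≥ C̄−1. Let f_1, …, f_n : ℝ^p → ℝ be differentiable with L-Lipschitz gradients. Let A_j (j = k−C̄+1,…,k) be row-stochastic n×n matrices, φ_j stochastic vectors in ℝ^n, R_j (j = k−C̄+1,…,k) row-stochastic n×n matrices, and v_j (j = k−C̄+1,…,k+1) stochastic vectors with v_jᵀ = v_{j+1}ᵀ R_j and [v_j]_i ≥ 1/n^{nC} for all i, j. Let x_j, y_j, s_j ∈ (ℝ^p)^n satisfy, for j = k−C̄+1,…,k: x_{j+1}^i = ∑_l [A_j]_{il} x_j^l − η y_j^i and s_{j+1}^i = ∑_l [R_j]_{il} s_j^l + (1/[v_{j+1}]_i)(∇f_i(x_{j+1}^i) − ∇f_i(x_j^i)). Define x̄_j = ∑_i [φ_j]_i x_j^i, x̃_j = (x_j^i − x̄_j)_i, and s̃_j = (s_j^i − ∑_l [v_j]_l s_j^l)_i. Assume: (a) for all b ∈ (ℝ^p)^n, ‖((I_n − 1_n v_{k+1}ᵀ)R_k⋯R_{k−C̄+1}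 ⊗ I_p) b‖ ≤ γ_B ‖((I_n − 1_n v_{k−C̄+1}ᵀ) ⊗ I_p) b‖; (b) for every j with k−C̄+2 ≤ j ≤ k+1 and all c, ‖((I_n − 1_n v_{k+1}ᵀ)R_k⋯R_j ⊗ I_p) c‖ ≤ Q_B ‖c‖ (the product being I_n when j = k+1); and (c) there are nonnegative reals ρ_j with ‖y_j‖ ≤ nL‖x̃_j‖ + nLρ_j + ‖s̃_j‖ for j = k−C̄+1,…,k. Then ‖s̃_{k+1}‖ ≤ γ_B ‖s̃_{k−C̄+1}‖ + m ∑_{l=0}^{C̄−1} [ (2√n + ηnL)‖x̃_{k−l}‖ + ηnL ρ_{k−l} + η ‖s̃_{k−l}‖ ]. -/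

import Mathlib

open Matrix

/-- The block ℓ₂ norm on `(ℝ^p)^n`: `‖x‖ = (∑_i ‖x^i‖₂²)^{1/2}`. -/
noncomputable def bnorm {n p : ℕ} (x : Fin n → EuclideanSpace ℝ (Fin p)) : ℝ :=
  Real.sqrt (∑ i, ‖x i‖ ^ 2)

/-- The blockwise action `(M ⊗ I_p)` of an `n×n` matrix on `(ℝ^p)^n`:
`((M ⊗ I_p)x)^i = ∑_j M_{ij} x^j`. -/
noncomputable def mapp {n p : ℕ} (M : Matrix (Fin n) (Fin n) ℝ)
    (x : Fin n → EuclideanSpace ℝ (Fin p)) : Fin n → EuclideanSpace ℝ (Fin p) :=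
  fun i => ∑ j, M i j • x j

/-- The matrix `I_n − 1_n φᵀ`. -/
noncomputable def proj {n : ℕ} (φ : Fin n → ℝ) : Matrix (Fin n) (Fin n) ℝ :=
  1 - Matrix.vecMulVec (fun _ => 1) φ

/-- The backward matrix product `A_hi ⋯ A_lo` (empty product, when `hi + 1 ≤ lo`, is `I`). -/
noncomputable def bprod {n : ℕ} (A : ℕ → Matrix (Fin n) (Fin n) ℝ) (lo hi : ℕ) :
    Matrix (Fin n) (Fin n) ℝ :=
  (((List.range (hi + 1 - lo)).map fun t => A (lo + t)).reverse).prod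

/-!
With `P_v = I - 1 vᵀ` we have `s̃_j = (P_{v_j} ⊗ I) s_j`. Unrolling the tracking recursion
`s_{j+1} = (R_j ⊗ I) s_j + g_j`, where `g_j` is the gradient increment rescaled by `1 / v_{j+1}`,
over `C̄` steps gives
`s̃_{k+1} = (P_{v_{k+1}} R_k ⋯ R_{k-C̄+1}) s_{k-C̄+1} + ∑_l (P_{v_{k+1}} R_k ⋯ R_{k+1-l}) g_{k-l}`.
Hypothesis (a) bounds the first term by `γ_B ‖s̃_{k-C̄+1}‖` and (b) the others by `Q_B ‖g_{k-l}‖`.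
The weight bound and the Lipschitz gradients give `‖g_j‖ ≤ n^{nC} L ‖x_{j+1} - x_j‖`, and since
`A_j` is row-stochastic, `x_{j+1} - x_j = (A_j - I) x̃_j - η y_j` for any choice of centre `x̄_j`,
so `‖x_{j+1} - x_j‖ ≤ 2√n ‖x̃_j‖ + η ‖y_j‖`; (c) then bounds `‖y_j‖`.
-/

section BlockNorm

variable {n p : ℕ}

theorem bnorm_eq_norm_toLp (x : Fin n → EuclideanSpace ℝ (Fin p)) :
    bnorm x = ‖WithLp.toLp 2 x‖ := by
  rw [bnorm, PiLp.norm_eq_of_L2]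

theorem bnorm_nonneg (x : Fin n → EuclideanSpace ℝ (Fin p)) : 0 ≤ bnorm x :=
  Real.sqrt_nonneg _

theorem bnorm_add_le (x y : Fin n → EuclideanSpace ℝ (Fin p)) :
    bnorm (x + y) ≤ bnorm x + bnorm y := by
  simpa only [bnorm_eq_norm_toLp, WithLp.toLp_add] using norm_add_le _ _

theorem bnorm_sub_le (x y : Fin n → EuclideanSpace ℝ (Fin p)) :
    bnorm (x - y) ≤ bnorm x + bnorm y := by
  simpa only [bnorm_eq_norm_toLp, WithLp.toLp_sub] using norm_sub_le _ _

theorem bnorm_smul (c : ℝ) (x : Fin n → EuclideanSpace ℝ (Fin p)) :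
    bnorm (c • x) = |c| * bnorm x := by
  rw [bnorm_eq_norm_toLp, bnorm_eq_norm_toLp, WithLp.toLp_smul, norm_smul, Real.norm_eq_abs]

theorem bnorm_sum_le {ι : Type*} (s : Finset ι) (x : ι → Fin n → EuclideanSpace ℝ (Fin p)) :
    bnorm (∑ l ∈ s, x l) ≤ ∑ l ∈ s, bnorm (x l) := by
  simpa only [bnorm_eq_norm_toLp, WithLp.toLp_sum] using norm_sum_le _ _

theorem norm_le_bnorm (x : Fin n → EuclideanSpace ℝ (Fin p)) (i : Fin n) : ‖x i‖ ≤ bnorm x := by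
  rw [bnorm, ← Real.sqrt_sq (norm_nonneg (x i))]
  exact Real.sqrt_le_sqrt (Finset.single_le_sum (fun j _ => sq_nonneg ‖x j‖) (Finset.mem_univ i))

theorem bnorm_le_mul_bnorm_of_norm_le {c : ℝ} (hc : 0 ≤ c)
    {x y : Fin n → EuclideanSpace ℝ (Fin p)} (h : ∀ i, ‖x i‖ ≤ c * ‖y i‖) :
    bnorm x ≤ c * bnorm y := by
  rw [bnorm, bnorm, ← Real.sqrt_sq hc, ← Real.sqrt_mul (sq_nonneg c), Finset.mul_sum]
  refine Real.sqrt_le_sqrt (Finset.sum_le_sum fun i _ => ?_)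
  rw [← mul_pow]
  exact pow_le_pow_left₀ (norm_nonneg _) (h i) 2

theorem bnorm_le_sqrt_mul_of_norm_le {a : ℝ} (ha : 0 ≤ a)
    {x : Fin n → EuclideanSpace ℝ (Fin p)} (h : ∀ i, ‖x i‖ ≤ a) :
    bnorm x ≤ Real.sqrt n * a := by
  calc bnorm x ≤ Real.sqrt (∑ _i : Fin n, a ^ 2) :=
        Real.sqrt_le_sqrt (Finset.sum_le_sum fun i _ => pow_le_pow_left₀ (norm_nonneg _) (h i) 2)
    _ = Real.sqrt n * a := by
        rw [Finset.sum_const, Finset.card_univ, Fintype.card_fin, nsmul_eq_mul,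
          Real.sqrt_mul (Nat.cast_nonneg n), Real.sqrt_sq ha]

end BlockNorm

section BlockAction

variable {n p : ℕ}

theorem mapp_one (x : Fin n → EuclideanSpace ℝ (Fin p)) : mapp 1 x = x := by
  funext i
  simp [mapp, Matrix.one_apply, ite_smul]

theorem mapp_mul (M N : Matrix (Fin n) (Fin n) ℝ) (x : Fin n → EuclideanSpace ℝ (Fin p)) :
    mapp (M * N) x = mapp M (mapp N x) := by
  funext i
  simp only [mapp, Matrix.mul_apply, Finset.sum_smul, Finset.smul_sum, smul_smul]
  exact Finset.sum_comm

theorem mapp_add (M : Matrix (Fin n) (Fin n) ℝ) (x y : Fin n → EuclideanSpace ℝ (Fin p)) :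
    mapp M (x + y) = mapp M x + mapp M y := by
  funext i
  simp [mapp, smul_add, Finset.sum_add_distrib]

theorem mapp_sum {ι : Type*} (M : Matrix (Fin n) (Fin n) ℝ) (s : Finset ι)
    (x : ι → Fin n → EuclideanSpace ℝ (Fin p)) :
    mapp M (∑ l ∈ s, x l) = ∑ l ∈ s, mapp M (x l) := by
  funext i
  simp only [mapp, Finset.sum_apply, Finset.smul_sum]
  exact Finset.sum_comm

theorem mapp_proj_apply (φ : Fin n → ℝ) (x : Fin n → EuclideanSpace ℝ (Fin p)) (i : Fin n) :
    mapp (proj φ) x i = x i - ∑ j, φ j • x j := by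
  simp [mapp, proj, Matrix.sub_apply, Matrix.one_apply, Matrix.vecMulVec_apply, sub_smul,
    Finset.sum_sub_distrib, ite_smul]

theorem mapp_sub_const {A : Matrix (Fin n) (Fin n) ℝ} (hA : ∀ i, ∑ l, A i l = 1)
    (x : Fin n → EuclideanSpace ℝ (Fin p)) (c : EuclideanSpace ℝ (Fin p)) (i : Fin n) :
    mapp A (fun l => x l - c) i = mapp A x i - c := by
  simp only [mapp, smul_sub, Finset.sum_sub_distrib, ← Finset.sum_smul, hA i, one_smul]

theorem bnorm_mapp_le_of_mem_rowStochastic {A : Matrix (Fin n) (Fin n) ℝ}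
    (hA : A ∈ rowStochastic ℝ (Fin n)) (x : Fin n → EuclideanSpace ℝ (Fin p)) :
    bnorm (mapp A x) ≤ Real.sqrt n * bnorm x := by
  refine bnorm_le_sqrt_mul_of_norm_le (bnorm_nonneg x) fun i => ?_
  calc ‖mapp A x i‖ ≤ ∑ l, ‖A i l • x l‖ := norm_sum_le _ _
    _ ≤ ∑ l, A i l * bnorm x := Finset.sum_le_sum fun l _ => by
        rw [norm_smul, Real.norm_of_nonneg (nonneg_of_mem_rowStochastic hA)]
        exact mul_le_mul_of_nonneg_left (norm_le_bnorm x l) (nonneg_of_mem_rowStochastic hA)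
    _ = bnorm x := by rw [← Finset.sum_mul, sum_row_of_mem_rowStochastic hA, one_mul]

end BlockAction

section BackwardProduct

variable {n : ℕ}

theorem bprod_succ_self (A : ℕ → Matrix (Fin n) (Fin n) ℝ) (hi : ℕ) : bprod A (hi + 1) hi = 1 := by
  simp [bprod]

theorem bprod_eq_bprod_succ_mul (A : ℕ → Matrix (Fin n) (Fin n) ℝ) {lo hi : ℕ} (h : lo ≤ hi) :
    bprod A lo hi = bprod A (lo + 1) hi * A lo := by
  unfold bprod
  rw [show hi + 1 - lo = hi + 1 - (lo + 1) + 1 by omega, List.range_succ_eq_map]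
  simp only [List.map_cons, List.reverse_cons, List.prod_append, List.map_map,
    List.prod_cons, List.prod_nil, add_zero, mul_one, Function.comp_def]
  congr 4
  funext t
  rw [Nat.succ_eq_add_one, add_comm t, add_assoc]

end BackwardProduct

theorem eq_mapp_bprod_add_sum_of_recurrence {n p : ℕ} (R : ℕ → Matrix (Fin n) (Fin n) ℝ)
    {s g : ℕ → Fin n → EuclideanSpace ℝ (Fin p)} {k d : ℕ} (hd : d ≤ k + 1)
    (hs : ∀ j, k + 1 - d ≤ j → j ≤ k → s (j + 1) = mapp (R j) (s j) + g j) :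
    s (k + 1) = mapp (bprod R (k + 1 - d) k) (s (k + 1 - d)) +
      ∑ l ∈ Finset.range d, mapp (bprod R (k + 1 - l) k) (g (k - l)) := by
  induction d with
  | zero => simp [bprod_succ_self, mapp_one]
  | succ d ih =>
    rw [ih (by omega) fun j hj => hs j (by omega), Finset.sum_range_succ,
      show k + 1 - (d + 1) = k - d by omega, show k + 1 - d = k - d + 1 by omega,
      hs (k - d) (by omega) (by omega), mapp_add, ← mapp_mul,
      ← bprod_eq_bprod_succ_mul R (by omega : k - d ≤ k)]
    abel

theorem bnorm_weighted_sub_le_of_lipschitz {n p : ℕ} {N L : ℝ} (hN : 0 < N) (hL : 0 ≤ L)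
    {G : Fin n → EuclideanSpace ℝ (Fin p) → EuclideanSpace ℝ (Fin p)}
    (hG : ∀ i z w, ‖G i z - G i w‖ ≤ L * ‖z - w‖) {w : Fin n → ℝ} (hw : ∀ i, 1 / N ≤ w i)
    (a b : Fin n → EuclideanSpace ℝ (Fin p)) :
    bnorm (fun i => (1 / w i) • (G i (a i) - G i (b i))) ≤ N * L * bnorm (a - b) := by
  refine bnorm_le_mul_bnorm_of_norm_le (by positivity) fun i => ?_
  have hwpos : 0 < w i := lt_of_lt_of_le (by positivity) (hw i)
  rw [norm_smul, Real.norm_of_nonneg (by positivity), mul_assoc]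
  exact mul_le_mul ((one_div_le hwpos hN).mpr (hw i)) (hG i _ _) (norm_nonneg _) hN.le

theorem bnorm_consensus_step_sub_le {n p : ℕ} (hn : 1 ≤ n) {A : Matrix (Fin n) (Fin n) ℝ}
    (hA : A ∈ rowStochastic ℝ (Fin n)) {η : ℝ} (hη : 0 ≤ η)
    {x x' y : Fin n → EuclideanSpace ℝ (Fin p)} (hx' : ∀ i, x' i = ∑ l, A i l • x l - η • y i)
    (c : EuclideanSpace ℝ (Fin p)) :
    bnorm (x' - x) ≤ 2 * Real.sqrt n * bnorm (fun i => x i - c) + η * bnorm y := by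
  have hx'_sub : x' - x = mapp A (fun i => x i - c) - (fun i => x i - c) - η • y := by
    funext i
    rw [Pi.sub_apply, Pi.sub_apply, Pi.sub_apply,
      mapp_sub_const (sum_row_of_mem_rowStochastic hA), hx' i]
    simp only [mapp, Pi.smul_apply]
    abel
  set xc : Fin n → EuclideanSpace ℝ (Fin p) := fun i => x i - c
  have hsqrt : 1 ≤ Real.sqrt n := Real.one_le_sqrt.mpr (by exact_mod_cast hn)
  calc bnorm (x' - x) ≤ bnorm (mapp A xc) + bnorm xc + η * bnorm y := by
        have hηy : bnorm (η • y) = η * bnorm y := by rw [bnorm_smul, abs_of_nonneg hη]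
        rw [hx'_sub]
        linarith [bnorm_sub_le (mapp A xc - xc) (η • y), bnorm_sub_le (mapp A xc) xc]
    _ ≤ 2 * Real.sqrt n * bnorm xc + η * bnorm y := by
        nlinarith [bnorm_mapp_le_of_mem_rowStochastic hA xc, bnorm_nonneg xc]

theorem stmt9_general (n p C Cb : ℕ) (hn : 1 ≤ n)
    (η L γB QB m : ℝ) (hη : 0 < η) (hL : 0 < L)
    (hQB : 0 < QB)
    (hm : m = (n : ℝ) ^ (n * C) * QB * L)
    (k : ℕ) (hk : Cb - 1 ≤ k)
    (f : Fin n → EuclideanSpace ℝ (Fin p) → ℝ)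
    (hlip : ∀ i z w, ‖gradient (f i) z - gradient (f i) w‖ ≤ L * ‖z - w‖)
    (A : ℕ → Matrix (Fin n) (Fin n) ℝ)
    (hAnn : ∀ j, k + 1 - Cb ≤ j → j ≤ k → ∀ i l, 0 ≤ A j i l)
    (hArow : ∀ j, k + 1 - Cb ≤ j → j ≤ k → ∀ i, ∑ l, A j i l = 1)
    (R : ℕ → Matrix (Fin n) (Fin n) ℝ)
    (v : ℕ → Fin n → ℝ)
    (hvlb : ∀ j, k + 1 - Cb ≤ j → j ≤ k + 1 → ∀ i, 1 / (n : ℝ) ^ (n * C) ≤ v j i)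
    (x y s : ℕ → Fin n → EuclideanSpace ℝ (Fin p))
    (hxupd : ∀ j, k + 1 - Cb ≤ j → j ≤ k →
      ∀ i, x (j + 1) i = (∑ l, A j i l • x j l) - η • y j i)
    (hsupd : ∀ j, k + 1 - Cb ≤ j → j ≤ k →
      ∀ i, s (j + 1) i = (∑ l, R j i l • s j l) +
        (1 / v (j + 1) i) • (gradient (f i) (x (j + 1) i) - gradient (f i) (x j i)))
    (xbar : ℕ → EuclideanSpace ℝ (Fin p))
    (xtld : ℕ → Fin n → EuclideanSpace ℝ (Fin p))
    (hxtld : ∀ j i, xtld j i = x j i - xbar j)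
    (stld : ℕ → Fin n → EuclideanSpace ℝ (Fin p))
    (hstld : ∀ j i, stld j i = s j i - ∑ l, v j l • s j l)
    (ha : ∀ b : Fin n → EuclideanSpace ℝ (Fin p),
      bnorm (mapp (proj (v (k + 1)) * bprod R (k + 1 - Cb) k) b) ≤
        γB * bnorm (mapp (proj (v (k + 1 - Cb))) b))
    (hb : ∀ j, k + 2 - Cb ≤ j → j ≤ k + 1 → ∀ c : Fin n → EuclideanSpace ℝ (Fin p),
      bnorm (mapp (proj (v (k + 1)) * bprod R j k) c) ≤ QB * bnorm c)
    (ρ : ℕ → ℝ)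
    (hc : ∀ j, k + 1 - Cb ≤ j → j ≤ k →
      bnorm (y j) ≤ n * L * bnorm (xtld j) + n * L * ρ j + bnorm (stld j)) :
    bnorm (stld (k + 1)) ≤
      γB * bnorm (stld (k + 1 - Cb)) +
        m * ∑ l ∈ Finset.range Cb,
          ((2 * Real.sqrt n + η * n * L) * bnorm (xtld (k - l)) +
            η * n * L * ρ (k - l) + η * bnorm (stld (k - l)))  := by
  have hN : (0 : ℝ) < (n : ℝ) ^ (n * C) := by positivity
  set g : ℕ → Fin n → EuclideanSpace ℝ (Fin p) := fun j i =>
    (1 / v (j + 1) i) • (gradient (f i) (x (j + 1) i) - gradient (f i) (x j i))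
  have hstld_eq : ∀ j, stld j = mapp (proj (v j)) (s j) := fun j =>
    funext fun i => by rw [hstld, mapp_proj_apply]
  have hg : ∀ j, k + 1 - Cb ≤ j → j ≤ k → bnorm (g j) ≤ (n : ℝ) ^ (n * C) * L *
      ((2 * Real.sqrt n + η * n * L) * bnorm (xtld j) + η * n * L * ρ j +
        η * bnorm (stld j)) := by
    intro j hlo hhi
    have hA : A j ∈ rowStochastic ℝ (Fin n) :=
      mem_rowStochastic_iff_sum.mpr ⟨hAnn j hlo hhi, hArow j hlo hhi⟩
    have hxdiff := bnorm_consensus_step_sub_le hn hA hη.le (hxupd j hlo hhi) (xbar j)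
    rw [← funext (hxtld j)] at hxdiff
    calc bnorm (g j) ≤ (n : ℝ) ^ (n * C) * L * bnorm (x (j + 1) - x j) :=
          bnorm_weighted_sub_le_of_lipschitz hN hL.le hlip (hvlb (j + 1) (by omega) (by omega)) _ _
      _ ≤ _ := mul_le_mul_of_nonneg_left (by nlinarith [hc j hlo hhi]) (by positivity)
  have hunroll := eq_mapp_bprod_add_sum_of_recurrence R (s := s) (g := g) (d := Cb) (by omega)
    fun j hlo hhi => funext fun i => hsupd j hlo hhi i
  calc bnorm (stld (k + 1))
      = bnorm (mapp (proj (v (k + 1)) * bprod R (k + 1 - Cb) k) (s (k + 1 - Cb)) +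
          ∑ l ∈ Finset.range Cb, mapp (proj (v (k + 1)) * bprod R (k + 1 - l) k) (g (k - l))) := by
        simp only [hstld_eq, hunroll, mapp_add, mapp_sum, mapp_mul]
    _ ≤ γB * bnorm (stld (k + 1 - Cb)) + ∑ l ∈ Finset.range Cb, QB * bnorm (g (k - l)) := by
        refine (bnorm_add_le _ _).trans (add_le_add ?_ ((bnorm_sum_le _ _).trans
          (Finset.sum_le_sum fun l hl => hb _ ?_ ?_ _)))
        · rw [hstld_eq]; exact ha _
        · have := Finset.mem_range.mp hl; omega
        · omega
    _ ≤ _ := by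
        rw [hm, Finset.mul_sum]
        refine add_le_add le_rfl (Finset.sum_le_sum fun l hl => ?_)
        have := Finset.mem_range.mp hl
        exact (mul_le_mul_of_nonneg_left (hg _ (by omega) (by omega)) hQB.le).trans_eq (by ring)

/-- Multi-step bound on the gradient-tracking error `s̃` (Lemma 7 of the paper). -/
theorem stmt9 (n p C Cb : ℕ) (hn : 1 ≤ n) (hp : 1 ≤ p) (hC : 1 ≤ C) (hCb : 1 ≤ Cb)
    (η L γB QB m : ℝ) (hη : 0 < η) (hL : 0 < L)
    (hγB : γB ∈ Set.Ioo (0 : ℝ) 1) (hQB : 0 < QB)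
    (hm : m = (n : ℝ) ^ (n * C) * QB * L)
    (k : ℕ) (hk : Cb - 1 ≤ k)
    (f : Fin n → EuclideanSpace ℝ (Fin p) → ℝ)
    (hdiff : ∀ i, Differentiable ℝ (f i))
    (hlip : ∀ i z w, ‖gradient (f i) z - gradient (f i) w‖ ≤ L * ‖z - w‖)
    (A : ℕ → Matrix (Fin n) (Fin n) ℝ)
    (hAnn : ∀ j, k + 1 - Cb ≤ j → j ≤ k → ∀ i l, 0 ≤ A j i l)
    (hArow : ∀ j, k + 1 - Cb ≤ j → j ≤ k → ∀ i, ∑ l, A j i l = 1)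
    (φ : ℕ → Fin n → ℝ)
    (hφst : ∀ j, k + 1 - Cb ≤ j → j ≤ k → (∀ i, 0 ≤ φ j i) ∧ ∑ i, φ j i = 1)
    (R : ℕ → Matrix (Fin n) (Fin n) ℝ)
    (hRnn : ∀ j, k + 1 - Cb ≤ j → j ≤ k → ∀ i l, 0 ≤ R j i l)
    (hRrow : ∀ j, k + 1 - Cb ≤ j → j ≤ k → ∀ i, ∑ l, R j i l = 1)
    (v : ℕ → Fin n → ℝ)
    (hvst : ∀ j, k + 1 - Cb ≤ j → j ≤ k + 1 → (∀ i, 0 ≤ v j i) ∧ ∑ i, v j i = 1)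
    (hvabs : ∀ j, k + 1 - Cb ≤ j → j ≤ k → v j = Matrix.vecMul (v (j + 1)) (R j))
    (hvlb : ∀ j, k + 1 - Cb ≤ j → j ≤ k + 1 → ∀ i, 1 / (n : ℝ) ^ (n * C) ≤ v j i)
    (x y s : ℕ → Fin n → EuclideanSpace ℝ (Fin p))
    (hxupd : ∀ j, k + 1 - Cb ≤ j → j ≤ k →
      ∀ i, x (j + 1) i = (∑ l, A j i l • x j l) - η • y j i)
    (hsupd : ∀ j, k + 1 - Cb ≤ j → j ≤ k →
      ∀ i, s (j + 1) i = (∑ l, R j i l • s j l) +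
        (1 / v (j + 1) i) • (gradient (f i) (x (j + 1) i) - gradient (f i) (x j i)))
    (xbar : ℕ → EuclideanSpace ℝ (Fin p))
    (hxbar : ∀ j, xbar j = ∑ i, φ j i • x j i)
    (xtld : ℕ → Fin n → EuclideanSpace ℝ (Fin p))
    (hxtld : ∀ j i, xtld j i = x j i - xbar j)
    (stld : ℕ → Fin n → EuclideanSpace ℝ (Fin p))
    (hstld : ∀ j i, stld j i = s j i - ∑ l, v j l • s j l)
    (ha : ∀ b : Fin n → EuclideanSpace ℝ (Fin p),
      bnorm (mapp (proj (v (k + 1)) * bprod R (k + 1 - Cb) k) b) ≤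
        γB * bnorm (mapp (proj (v (k + 1 - Cb))) b))
    (hb : ∀ j, k + 2 - Cb ≤ j → j ≤ k + 1 → ∀ c : Fin n → EuclideanSpace ℝ (Fin p),
      bnorm (mapp (proj (v (k + 1)) * bprod R j k) c) ≤ QB * bnorm c)
    (ρ : ℕ → ℝ) (hρ : ∀ j, 0 ≤ ρ j)
    (hc : ∀ j, k + 1 - Cb ≤ j → j ≤ k →
      bnorm (y j) ≤ n * L * bnorm (xtld j) + n * L * ρ j + bnorm (stld j)) :
    bnorm (stld (k + 1)) ≤
      γB * bnorm (stld (k + 1 - Cb)) +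
        m * ∑ l ∈ Finset.range Cb,
          ((2 * Real.sqrt n + η * n * L) * bnorm (xtld (k - l)) +
            η * n * L * ρ (k - l) + η * bnorm (stld (k - l))) :=
  stmt9_general n p C Cb hn η L γB QB m hη hL hQB hm k hk f hlip A hAnn hArow R v hvlb x y s hxupd
    hsupd xbar xtld hxtld stld hstld ha hb ρ hc
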